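/- arXiv:1108.0169 — 4 statements merged into one kernel-verified Lean document; each statement's English description precedes it below -/
import Mathlib

section
/- Let $(E_i)_{i\in\mathbb{N}}$ and $(F_j)_{j\in\mathbb{N}}$ be sequences of normed spaces, $H$ a topological vector space, and $\beta_{i,j}\colon E_i \times F_j \to H$ continuous bilinear maps for $i,j\in\mathbb{N}$. Then the bilinear map $\beta\colon \bigoplus_{i\in\mathbb{N}}E_i \times \bigoplus_{j\in\mathbb{N}}F_j \to H$ defined by $\beta((x_i)_i, (y_j)_j) = \sum_{(i,j)\in\mathbb{N}^2}\beta_{i,j}(x_i,y_j)$ is continuous. -/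
/-!
Box neighbourhoods of zero can control countably many terms at once: by continuity of addition,
a neighbourhood `V` of zero admits neighbourhoods `W n` such that every finite sum with its `n`-th
term in `W n` lies in `V`. For the double sum, continuity of `β i j` at the origin gives `δ i j > 0`
with `‖x‖ * ‖y‖ < δ i j → β i j x y ∈ W (i, j)` (rescale `x` and `y` in opposite directions), and
`δ` dominates a product `ε i * η j` of positive sequences, so the product of the boxes of radii
`ε` and `η` is mapped into `V`. Since the map is biadditive, continuity at the origin and of the
partial maps at zero gives continuity everywhere.
-/

open Topology Filter

section FinsetSum

variable {H : Type*} [AddCommMonoid H] [TopologicalSpace H] [ContinuousAdd H]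

theorem exists_seq_nhds_zero_half {V : Set H} (hV : V ∈ 𝓝 0) :
    ∃ U : ℕ → Set H, U 0 = V ∧ (∀ n, U n ∈ 𝓝 0) ∧
      ∀ n, ∀ v ∈ U (n + 1), ∀ w ∈ U (n + 1), v + w ∈ U n := by
  choose half half_mem half_add using
    fun s : {s : Set H // s ∈ 𝓝 0} => exists_nhds_zero_half s.2
  let U : ℕ → {s : Set H // s ∈ 𝓝 0} := fun n => n.rec ⟨V, hV⟩ fun _ s => ⟨half s, half_mem s⟩
  exact ⟨fun n => (U n).1, rfl, fun n => (U n).2, fun n => half_add (U n)⟩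

theorem exists_nhds_zero_nat_finset_sum_mem {V : Set H} (hV : V ∈ 𝓝 0) :
    ∃ W : ℕ → Set H, (∀ n, W n ∈ 𝓝 0) ∧
      ∀ (s : Finset ℕ) (g : ℕ → H), (∀ n ∈ s, g n ∈ W n) → ∑ n ∈ s, g n ∈ V := by
  obtain ⟨U, rfl, hU, hUadd⟩ := exists_seq_nhds_zero_half hV
  have hU_succ : ∀ n, U (n + 1) ⊆ U n := fun n v hv => by
    simpa using hUadd n v hv 0 (mem_of_mem_nhds (hU _))
  have hU_anti : Antitone U := antitone_nat_of_succ_le hU_succ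
  have tail : ∀ (s : Finset ℕ) (g : ℕ → H) (m : ℕ), (∀ n ∈ s, m ≤ n) →
      (∀ n ∈ s, g n ∈ U (n + 1)) → ∑ n ∈ s, g n ∈ U m := by
    intro s
    induction s using Finset.induction_on_min with
    | empty => exact fun _ m _ _ => by simpa using mem_of_mem_nhds (hU m)
    | insert a s ha ih =>
      intro g m hm hg
      rw [Finset.sum_insert fun has => lt_irrefl a (ha a has)]
      have hma : m + 1 ≤ a + 1 := by simpa using hm a (s.mem_insert_self a)
      refine hUadd m _ (hU_anti hma (hg a (s.mem_insert_self a))) _ (hU_anti hma ?_)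
      exact ih g (a + 1) (fun n hn => ha n hn) fun n hn => hg n (Finset.mem_insert_of_mem hn)
  exact ⟨fun n => U (n + 1), fun n => hU _, fun s g hg => tail s g 0 (fun n _ => n.zero_le) hg⟩

theorem exists_nhds_zero_finset_sum_mem {ι : Type*} [Countable ι] {V : Set H} (hV : V ∈ 𝓝 0) :
    ∃ W : ι → Set H, (∀ i, W i ∈ 𝓝 0) ∧
      ∀ (s : Finset ι) (g : ι → H), (∀ i ∈ s, g i ∈ W i) → ∑ i ∈ s, g i ∈ V := by
  classical
  obtain ⟨e, he⟩ := Countable.exists_injective_nat ι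
  obtain ⟨W, hW, hWsum⟩ := exists_nhds_zero_nat_finset_sum_mem hV
  refine ⟨fun i => W (e i), fun i => hW (e i), fun s g hg => ?_⟩
  have hsum := hWsum (s.map ⟨e, he⟩) (Function.extend e g 0) <| by
    simpa [he.extend_apply] using hg
  simpa [he.extend_apply] using hsum

end FinsetSum

theorem Finset.exists_pos_forall_le {ι : Type*} (s : Finset ι) {f : ι → ℝ}
    (hf : ∀ i ∈ s, 0 < f i) : ∃ c > 0, ∀ i ∈ s, c ≤ f i :=
  have h : ∀ᶠ c in 𝓝[>] (0 : ℝ), 0 < c ∧ ∀ i ∈ s, c ≤ f i :=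
    eventually_mem_nhdsWithin.and <| (eventually_all_finset s).2 fun i hi =>
      eventually_nhdsWithin_of_eventually_nhds (eventually_le_nhds (hf i hi))
  h.exists

theorem exists_pos_mul_le_of_pos {δ : ℕ → ℕ → ℝ} (hδ : ∀ i j, 0 < δ i j) :
    ∃ ε η : ℕ → ℝ, (∀ i, 0 < ε i) ∧ (∀ j, 0 < η j) ∧ ∀ i j, ε i * η j ≤ δ i j := by
  -- `η j` handles the entries with `i ≤ j`, then `ε i` those with `j ≤ i`
  choose η hη hηδ using fun j =>
    (Finset.range (j + 1)).exists_pos_forall_le (f := fun i => δ i j) fun i _ => hδ i j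
  choose ε hε hεδ using fun i =>
    (Finset.range (i + 1)).exists_pos_forall_le (f := fun j => min 1 (δ i j / η j))
      fun j _ => lt_min one_pos (div_pos (hδ i j) (hη j))
  refine ⟨ε, η, hε, hη, fun i j => ?_⟩
  rcases le_total i j with hij | hji
  · have hε1 : ε i ≤ 1 := (hεδ i 0 (by simp)).trans (min_le_left _ _)
    calc ε i * η j ≤ 1 * δ i j :=
          mul_le_mul hε1 (hηδ j i (by simpa [Nat.lt_succ_iff])) (hη j).le zero_le_one
      _ = δ i j := one_mul _
  · exact (le_div_iff₀ (hη j)).1 <|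
      (hεδ i j (by simpa [Nat.lt_succ_iff])).trans (min_le_right _ _)

theorem LinearMap.exists_pos_forall_norm_mul_norm_lt_apply_mem {E F H : Type*}
    [NormedAddCommGroup E] [NormedSpace ℝ E] [NormedAddCommGroup F] [NormedSpace ℝ F]
    [AddCommGroup H] [Module ℝ H] [TopologicalSpace H]
    (β : E →ₗ[ℝ] F →ₗ[ℝ] H) (hβ : Continuous fun p : E × F => β p.1 p.2)
    {W : Set H} (hW : W ∈ 𝓝 0) :
    ∃ δ > 0, ∀ x y, ‖x‖ * ‖y‖ < δ → β x y ∈ W := by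
  obtain ⟨r, hr, hball⟩ : ∃ r > 0, ∀ p : E × F, dist p 0 < r → β p.1 p.2 ∈ W :=
    Metric.eventually_nhds_iff.1 (hβ.tendsto' 0 0 (by simp) hW)
  refine ⟨r ^ 2, by positivity, fun x y hxy => ?_⟩
  rcases eq_or_ne x 0 with rfl | hx
  · simpa using mem_of_mem_nhds hW
  have hx' : 0 < ‖x‖ := norm_pos_iff.2 hx
  -- rescale `(x, y)` to `(t • x, t⁻¹ • y)`, which lies in the ball of radius `r`
  obtain ⟨t, hyt, htx⟩ : ∃ t, ‖y‖ / r < t ∧ t < r / ‖x‖ :=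
    exists_between <| by rw [div_lt_div_iff₀ hr hx']; nlinarith
  have ht : 0 < t := (div_nonneg (norm_nonneg y) hr.le).trans_lt hyt
  have hmem := hball (t • x, t⁻¹ • y) <| by
    rw [dist_zero_right, Prod.norm_def, norm_smul, norm_smul, norm_inv,
      Real.norm_of_nonneg ht.le, max_lt_iff]
    constructor
    · rwa [← lt_div_iff₀ hx']
    · rw [inv_mul_lt_iff₀ ht]; rwa [div_lt_iff₀ hr] at hyt
  simpa [smul_smul, ht.ne'] using hmem

namespace DFinsupp

def sumAddHom₂ {ι κ H : Type*} [DecidableEq ι] [DecidableEq κ] {E : ι → Type*}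
    {F : κ → Type*} [∀ i, AddZeroClass (E i)] [∀ j, AddZeroClass (F j)] [AddCommMonoid H]
    (h : ∀ i j, E i →+ F j →+ H) : (Π₀ i, E i) →+ (Π₀ j, F j) →+ H :=
  liftAddHom fun i => liftAddHom.toAddMonoidHom.comp (AddMonoidHom.pi (h i))

theorem sumAddHom₂_apply {ι κ H : Type*} [DecidableEq ι] [DecidableEq κ]
    {E : ι → Type*} {F : κ → Type*} [∀ i, AddZeroClass (E i)] [∀ j, AddZeroClass (F j)]
    [∀ i (x : E i), Decidable (x ≠ 0)] [∀ j (y : F j), Decidable (y ≠ 0)] [AddCommMonoid H]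
    (h : ∀ i j, E i →+ F j →+ H) (x : Π₀ i, E i) (y : Π₀ j, F j) :
    sumAddHom₂ h x y = x.sum fun i xi => y.sum fun j yj => h i j xi yj := by
  simp [sumAddHom₂, sumAddHom_apply, DFinsupp.sum]

theorem tendsto_sum_nhds_zero {ι H : Type*} [Countable ι] [DecidableEq ι] {E : ι → Type*}
    [AddCommMonoid H] [TopologicalSpace H] [ContinuousAdd H]
    [∀ i, Zero (E i)] [∀ i, TopologicalSpace (E i)] [∀ i (x : E i), Decidable (x ≠ 0)]
    [TopologicalSpace (Π₀ i, E i)]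
    (hE : (𝓝 (0 : Π₀ i, E i)).HasBasis
      (fun U : ∀ i, Set (E i) => ∀ i, U i ∈ 𝓝 (0 : E i))
      (fun U => {x : Π₀ i, E i | ∀ i, x i ∈ U i}))
    {f : ∀ i, E i → H} (hf : ∀ i, Tendsto (f i) (𝓝 0) (𝓝 0)) :
    Tendsto (fun x : Π₀ i, E i => x.sum f) (𝓝 0) (𝓝 0) := by
  intro V hV
  obtain ⟨W, hW, hWsum⟩ := exists_nhds_zero_finset_sum_mem (ι := ι) hV
  exact hE.mem_iff.2 ⟨fun i => f i ⁻¹' W i, fun i => hf i (hW i),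
    fun x hx => hWsum _ _ fun i _ => hx i⟩

theorem tendsto_sum_sum_nhds_zero {E F : ℕ → Type*} {H : Type*}
    [∀ i, NormedAddCommGroup (E i)] [∀ i, NormedSpace ℝ (E i)]
    [∀ j, NormedAddCommGroup (F j)] [∀ j, NormedSpace ℝ (F j)]
    [∀ i (x : E i), Decidable (x ≠ 0)] [∀ j (y : F j), Decidable (y ≠ 0)]
    [AddCommGroup H] [Module ℝ H] [TopologicalSpace H] [ContinuousAdd H]
    [TopologicalSpace (Π₀ i, E i)] [TopologicalSpace (Π₀ j, F j)]
    (hE : (𝓝 (0 : Π₀ i, E i)).HasBasis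
      (fun U : ∀ i, Set (E i) => ∀ i, U i ∈ 𝓝 (0 : E i))
      (fun U => {x : Π₀ i, E i | ∀ i, x i ∈ U i}))
    (hF : (𝓝 (0 : Π₀ j, F j)).HasBasis
      (fun V : ∀ j, Set (F j) => ∀ j, V j ∈ 𝓝 (0 : F j))
      (fun V => {y : Π₀ j, F j | ∀ j, y j ∈ V j}))
    (β : ∀ i j, E i →ₗ[ℝ] F j →ₗ[ℝ] H)
    (hβ : ∀ i j, Continuous fun p : E i × F j => β i j p.1 p.2) :
    Tendsto (fun p : (Π₀ i, E i) × (Π₀ j, F j) =>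
      p.1.sum fun i x => p.2.sum fun j y => β i j x y) (𝓝 0) (𝓝 0) := by
  rw [← Prod.mk_zero_zero, nhds_prod_eq, (hE.prod hF).tendsto_left_iff]
  intro V hV
  obtain ⟨W, hW, hWsum⟩ := exists_nhds_zero_finset_sum_mem (ι := ℕ × ℕ) hV
  choose δ hδ hδW using fun i j =>
    (β i j).exists_pos_forall_norm_mul_norm_lt_apply_mem (hβ i j) (hW (i, j))
  obtain ⟨ε, η, hε, hη, hεη⟩ := exists_pos_mul_le_of_pos hδ
  refine ⟨(fun i => Metric.ball 0 (ε i), fun j => Metric.ball 0 (η j)),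
    ⟨fun i => Metric.ball_mem_nhds _ (hε i), fun j => Metric.ball_mem_nhds _ (hη j)⟩, ?_⟩
  rintro ⟨x, y⟩ ⟨hx, hy⟩
  simp only [Set.mem_ofPred_eq, mem_ball_zero_iff] at hx hy
  change ∑ i ∈ x.support, ∑ j ∈ y.support, β i j (x i) (y j) ∈ V
  rw [← Finset.sum_product']
  exact hWsum _ _ fun p _ => hδW p.1 p.2 _ _ <|
    (mul_lt_mul'' (hx _) (hy _) (norm_nonneg _) (norm_nonneg _)).trans_le (hεη _ _)

end DFinsupp

/-- Corollary: for sequences of *normed* spaces `E i`, `F j` and continuous bilinear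
maps `β i j : E i × F j → H`, the bilinear map
`β ((x_i), (y_j)) = ∑_{i,j} β i j (x_i) (y_j)` on the direct sums (box topology) is
continuous. -/
theorem corollary_normedCase
    {E F : ℕ → Type*} {H : Type*}
    [∀ i, NormedAddCommGroup (E i)] [∀ i, NormedSpace ℝ (E i)]
    [∀ j, NormedAddCommGroup (F j)] [∀ j, NormedSpace ℝ (F j)]
    [∀ i (x : E i), Decidable (x ≠ 0)] [∀ j (y : F j), Decidable (y ≠ 0)]
    [AddCommGroup H] [Module ℝ H] [TopologicalSpace H] [IsTopologicalAddGroup H]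
    [TopologicalSpace (Π₀ i, E i)] [IsTopologicalAddGroup (Π₀ i, E i)]
    [TopologicalSpace (Π₀ j, F j)] [IsTopologicalAddGroup (Π₀ j, F j)]
    (hE : (𝓝 (0 : Π₀ i, E i)).HasBasis
      (fun U : ∀ i, Set (E i) => ∀ i, U i ∈ 𝓝 (0 : E i))
      (fun U => {x : Π₀ i, E i | ∀ i, x i ∈ U i}))
    (hF : (𝓝 (0 : Π₀ j, F j)).HasBasis
      (fun V : ∀ j, Set (F j) => ∀ j, V j ∈ 𝓝 (0 : F j))
      (fun V => {y : Π₀ j, F j | ∀ j, y j ∈ V j}))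
    (β : ∀ i j, E i →ₗ[ℝ] F j →ₗ[ℝ] H)
    (hβ : ∀ i j, Continuous fun p : E i × F j => β i j p.1 p.2) :
    Continuous fun p : (Π₀ i, E i) × (Π₀ j, F j) =>
      p.1.sum fun i x => p.2.sum fun j y => β i j x y := by
  set B := DFinsupp.sumAddHom₂ fun i j => LinearMap.toAddMonoidHom'.comp (β i j).toAddMonoidHom
  have hB : ∀ x, ⇑(B x) = fun y => x.sum fun i xi => y.sum fun j yj => β i j xi yj :=
    fun x => funext (DFinsupp.sumAddHom₂_apply _ x)
  have hβ_left : ∀ i j (y : F j), Tendsto (β i j · y) (𝓝 0) (𝓝 0) := fun i j y => by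
    simpa [Function.comp_def] using ((hβ i j).comp (Continuous.prodMk_left y)).tendsto 0
  have hβ_right : ∀ i j (x : E i), Tendsto (β i j x) (𝓝 0) (𝓝 0) := fun i j x => by
    simpa [Function.comp_def] using ((hβ i j).comp (Continuous.prodMk_right x)).tendsto 0
  refine (continuous_of_continuousAt_zero₂ B ?_ (fun x => ?_) (fun y => ?_)).congr
      (fun p => congrFun (hB p.1) p.2) <;>
    simp only [ContinuousAt, map_zero, AddMonoidHom.zero_apply, Prod.mk_zero_zero] <;>
    simp only [hB]
  · exact DFinsupp.tendsto_sum_sum_nhds_zero hE hF β hβ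
  · simpa only [DFinsupp.sum, Finset.sum_const_zero] using tendsto_finsetSum x.support fun i _ =>
      DFinsupp.tendsto_sum_nhds_zero hF (hβ_right i · (x i))
  · refine DFinsupp.tendsto_sum_nhds_zero hE fun i => ?_
    simpa only [DFinsupp.sum, Finset.sum_const_zero] using
      tendsto_finsetSum y.support fun j _ => hβ_left i j (y j)
end

section
/- Let $H = \mathbb{R}^{\mathbb{N}}$ with the product topology, viewed as an algebra under pointwise multiplication $\diamond$. Then the bilinear map $\beta\colon \bigoplus_{i\in\mathbb{N}}\mathbb{R}^{\mathbb{N}} \times \bigoplus_{j\in\mathbb{N}}\mathbb{R}^{\mathbb{N}} \to \mathbb{R}^{\mathbb{N}}$, $\beta((f_i)_i,(g_j)_j) := \sum_{i,j\in\mathbb{N}} f_i \diamond g_j$, is continuous. -/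
/-!
Writing `T` for the total sum `⨁ᵢ ℝ^ℕ → ℝ^ℕ`, we have `β (f, g) = T f ⋄ T g`, and `⋄` is
continuous on `ℝ^ℕ`, so it suffices that `T` is continuous. Since `T` is additive, continuity at
`0` is enough, and this holds for the total sum into any topological additive group: given a
neighbourhood `V` of `0`, choose `W₀ = V` and `W (n + 1) + W (n + 1) ⊆ W n`; then every finite
sum `∑ uᵢ` with `uᵢ ∈ W (i + 1)` lies in `V`, so the box `{x | ∀ i, x i ∈ W (i + 1)}` is mapped
into `V`.
-/

open Topology Filter Finset

theorem exists_seq_nhds_zero_forall_sum_range_mem {G : Type*} [AddCommMonoid G]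
    [TopologicalSpace G] [ContinuousAdd G] {V : Set G} (hV : V ∈ 𝓝 0) :
    ∃ W : ℕ → Set G, (∀ i, W i ∈ 𝓝 0) ∧
      ∀ u : ℕ → G, (∀ i, u i ∈ W i) → ∀ n, ∑ i ∈ range n, u i ∈ V := by
  choose half half_mem half_add using fun s : {s : Set G // s ∈ 𝓝 0} => exists_nhds_zero_half s.2
  let W : ℕ → {s : Set G // s ∈ 𝓝 0} :=
    fun n => Nat.rec ⟨V, hV⟩ (fun _ s => ⟨half s, half_mem s⟩) n
  refine ⟨fun i => W (i + 1), fun i => (W (i + 1)).2, fun u hu n => ?_⟩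
  have partial_sum_add_mem : ∀ n, ∀ w ∈ (W n).1, ∑ i ∈ range n, u i + w ∈ V := by
    intro n
    induction n with
    | zero => simp [W]
    | succ n ih =>
      intro w hw
      rw [sum_range_succ, add_assoc]
      exact ih _ (half_add _ _ (hu n) _ hw)
  simpa using partial_sum_add_mem n 0 (mem_of_mem_nhds (W n).2)

theorem DFinsupp.continuous_sum_id_of_box_mem_nhds {G : Type*} [AddCommGroup G]
    [TopologicalSpace G] [ContinuousAdd G] [∀ g : G, Decidable (g ≠ 0)]
    [TopologicalSpace (Π₀ _ : ℕ, G)] [IsTopologicalAddGroup (Π₀ _ : ℕ, G)]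
    (hbox : ∀ U : ℕ → Set G, (∀ i, U i ∈ 𝓝 0) → {x : Π₀ _ : ℕ, G | ∀ i, x i ∈ U i} ∈ 𝓝 0) :
    Continuous fun x : Π₀ _ : ℕ, G => x.sum fun _ g => g := by
  let T : (Π₀ _ : ℕ, G) →+ G := DFinsupp.sumAddHom fun _ => AddMonoidHom.id G
  have hT : ⇑T = fun x => x.sum fun _ g => g := funext fun x => DFinsupp.sumAddHom_apply _ x
  rw [← hT]
  refine continuous_of_tendsto_nhds_zero T fun V hV => ?_
  obtain ⟨W, hW, hsum⟩ := exists_seq_nhds_zero_forall_sum_range_mem hV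
  refine mem_map.2 (mem_of_superset (hbox W hW) fun x hx => ?_)
  have hsupp : x.support ⊆ range (x.support.sup id + 1) := fun i hi =>
    mem_range.2 (Nat.lt_succ_of_le (le_sup (f := id) hi))
  simp only [Set.mem_preimage, hT]
  rw [DFinsupp.sum_of_support_subset hsupp fun _ _ => rfl]
  exact hsum x hx _

theorem DFinsupp.sum_sum_mul {ι κ R : Type*} [DecidableEq ι] [DecidableEq κ]
    [NonUnitalNonAssocSemiring R] [∀ r : R, Decidable (r ≠ 0)] (x : Π₀ _ : ι, R)
    (y : Π₀ _ : κ, R) :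
    (x.sum fun _ f => y.sum fun _ g => f * g) = (x.sum fun _ f => f) * y.sum fun _ g => g := by
  simp only [DFinsupp.sum, Finset.sum_mul_sum]

/-- Example: the bilinear map
`β ((f_i), (g_j)) = ∑_{i,j} f_i ⋄ g_j` (pointwise products in `ℝ^ℕ` with the product
topology) on the direct sums `⨁_{i∈ℕ} ℝ^ℕ` (box topology) is continuous. -/
theorem example_pointwiseMul_continuous
    [∀ x : ℕ → ℝ, Decidable (x ≠ 0)]
    [TopologicalSpace (Π₀ _ : ℕ, ℕ → ℝ)] [IsTopologicalAddGroup (Π₀ _ : ℕ, ℕ → ℝ)]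
    (hbox : (𝓝 (0 : Π₀ _ : ℕ, ℕ → ℝ)).HasBasis
      (fun U : ℕ → Set (ℕ → ℝ) => ∀ i, U i ∈ 𝓝 (0 : ℕ → ℝ))
      (fun U => {x : Π₀ _ : ℕ, ℕ → ℝ | ∀ i, x i ∈ U i})) :
    Continuous fun p : (Π₀ _ : ℕ, ℕ → ℝ) × (Π₀ _ : ℕ, ℕ → ℝ) =>
      p.1.sum fun _ f => p.2.sum fun _ g => f * g := by
  have hsum := DFinsupp.continuous_sum_id_of_box_mem_nhds fun U hU => hbox.mem_of_mem hU
  simp only [DFinsupp.sum_sum_mul]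
  exact (hsum.comp continuous_fst).mul (hsum.comp continuous_snd)
end

section
/- The convolution map $f\colon C^\infty_c(\mathbb{R}^n)\times C^\infty_c(\mathbb{R}^n)\to C^\infty_c(\mathbb{R}^n)$, $(\gamma,\eta)\mapsto\gamma*\eta$, is continuous. -/
open Topology Filter Function MeasureTheory

/-- The partial derivative `∂_i f` of `f : ℝⁿ → ℝ`. -/
noncomputable def pderivI (n : ℕ) (i : Fin n) (f : (Fin n → ℝ) → ℝ) :
    (Fin n → ℝ) → ℝ :=
  fun x => fderiv ℝ f x (Pi.single i 1)

/-- The iterated partial derivative `∂^α f` for a multi-index `α`. -/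
noncomputable def pderivMulti (n : ℕ) (α : Fin n → ℕ) (f : (Fin n → ℝ) → ℝ) :
    (Fin n → ℝ) → ℝ :=
  (List.finRange n).foldr (fun i g => (pderivI n i)^[α i] g) f

/-- The norm `‖f‖_k = max_{|α| ≤ k} ‖∂^α f‖_∞` (as a supremum in `ℝ`). -/
noncomputable def crNorm (n k : ℕ) (f : (Fin n → ℝ) → ℝ) : ℝ :=
  sSup {c | ∃ (α : Fin n → ℕ) (x : Fin n → ℝ), (∑ i, α i) ≤ k ∧ c = |pderivMulti n α f x|}

/-- The space `C^r_K` of `C^r`-functions `ℝⁿ → ℝ` with support contained in `K`. -/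
noncomputable def CrK (n : ℕ) (r : ℕ∞) (K : Set (Fin n → ℝ)) :
    Submodule ℝ ((Fin n → ℝ) → ℝ) where
  carrier := {f | ContDiff ℝ r f ∧ tsupport f ⊆ K}
  add_mem' := fun hf hg =>
    ⟨hf.1.add hg.1, (tsupport_add _ _).trans (Set.union_subset hf.2 hg.2)⟩
  zero_mem' := ⟨contDiff_const, by
    have h0 : tsupport (0 : (Fin n → ℝ) → ℝ) = ∅ := tsupport_eq_empty_iff.mpr rfl
    rw [h0]
    exact Set.empty_subset K⟩
  smul_mem' := fun c f hf =>
    ⟨hf.1.const_smul c, (closure_mono (Function.support_const_smul_subset c f)).trans hf.2⟩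

theorem mul_mem_CrK {n : ℕ} {r : ℕ∞} {K : Set (Fin n → ℝ)}
    {f g : (Fin n → ℝ) → ℝ} (hf : f ∈ CrK n r K) (hg : g ∈ CrK n r K) :
    f * g ∈ CrK n r K :=
  ⟨hf.1.mul hg.1, subset_trans (closure_mono (support_mul_subset_left f g)) hf.2⟩

/-- The space `C^r_c(Ω)` of compactly supported `C^r`-functions with support in `Ω`. -/
noncomputable def Crc (n : ℕ) (r : ℕ∞) (Ω : Set (Fin n → ℝ)) :
    Submodule ℝ ((Fin n → ℝ) → ℝ) where
  carrier := {f | ContDiff ℝ r f ∧ HasCompactSupport f ∧ tsupport f ⊆ Ω}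
  add_mem' := fun hf hg =>
    ⟨hf.1.add hg.1, hf.2.1.add hg.2.1,
      (tsupport_add _ _).trans (Set.union_subset hf.2.2 hg.2.2)⟩
  zero_mem' := by
    have h0 : tsupport (0 : (Fin n → ℝ) → ℝ) = ∅ := tsupport_eq_empty_iff.mpr rfl
    refine ⟨contDiff_const, hasCompactSupport_def.mpr ?_, ?_⟩
    · rw [Function.support_eq_empty_iff.mpr rfl, closure_empty]; exact isCompact_empty
    · rw [h0]; exact Set.empty_subset Ω
  smul_mem' := fun c f hf =>
    ⟨hf.1.const_smul c, hf.2.1.mono (Function.support_const_smul_subset c f),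
      (closure_mono (Function.support_const_smul_subset c f)).trans hf.2.2⟩

theorem crK_le_crc {n : ℕ} {r : ℕ∞} {K Ω : Set (Fin n → ℝ)}
    (hK : IsCompact K) (hKΩ : K ⊆ Ω) {f : (Fin n → ℝ) → ℝ}
    (hf : f ∈ CrK n r K) : f ∈ Crc n r Ω :=
  ⟨hf.1, hK.of_isClosed_subset isClosed_closure hf.2, hf.2.trans hKΩ⟩

theorem conv_mem_Crc {n : ℕ} {γ η : (Fin n → ℝ) → ℝ}
    (hγ : γ ∈ Crc n ⊤ Set.univ) (hη : η ∈ Crc n ⊤ Set.univ) :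
    MeasureTheory.convolution γ η (ContinuousLinearMap.mul ℝ ℝ) volume ∈
      Crc n ⊤ Set.univ := by
  refine ⟨?_, ?_, Set.subset_univ _⟩
  · exact hγ.2.1.contDiff_convolution_left _ hγ.1 hη.1.continuous.locallyIntegrable
  · exact hγ.2.1.convolution _ hη.2.1

/-!
Let `W` be a convex neighbourhood of `0` and `B_i` the closed ball of radius `i`. Continuity of the
inclusions `C^∞_{B_m} → C^∞_c` gives balls `{φ ∈ C^∞_{B_m} : ‖φ‖_{k_m} < ε_m}` inside `W`.
All derivatives of `φ * ψ` can be put on `φ`, so for `φ ∈ C^∞_{B_i}`, `ψ ∈ C^∞_{B_j}` and `j ≤ i`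
we have `φ * ψ ∈ C^∞_{B_{i+j}}` and `‖φ * ψ‖_k ≤ ‖φ‖_k ‖ψ‖_0 vol(B_i)`. Choosing `κ_i ≥ k_m` and
`δ_i ≤ 1` with `δ_i vol(B_i) < ε_m` for all `m ≤ 2i`, the convex hull `U` of the balls
`{φ ∈ C^∞_{B_i} : ‖φ‖_{κ_i} < δ_i}` satisfies `U * U ⊆ W`, by bilinearity and convexity of `W`.
The gauge of the convex, balanced, absorbent set `U` defines a locally convex topology in which
every inclusion `C^∞_K → C^∞_c` is continuous; the inductive limit topology is finer, so `U` is a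
neighbourhood of `0` in it. Thus convolution is continuous at `(0, 0)`, hence everywhere, being
bilinear.
-/

open Set Metric
open scoped Convolution Pointwise

theorem IsCompact.exists_nat_subset_closedBall {X : Type*} [PseudoMetricSpace X] {s : Set X}
    (hs : IsCompact s) (x : X) : ∃ i : ℕ, s ⊆ closedBall x i := by
  obtain ⟨r, hr⟩ := hs.isBounded.subset_closedBall x
  obtain ⟨i, hi⟩ := exists_nat_ge r
  exact ⟨i, hr.trans (closedBall_subset_closedBall hi)⟩

theorem exists_pos_le_one_forall_mul_lt {ι : Type*} (s : Finset ι) {ε : ι → ℝ}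
    (hε : ∀ m ∈ s, 0 < ε m) (v : ℝ) : ∃ δ, 0 < δ ∧ δ ≤ 1 ∧ ∀ m ∈ s, δ * v < ε m := by
  have hv : Tendsto (fun δ : ℝ => δ * v) (𝓝 0) (𝓝 0) :=
    (continuous_mul_const v).tendsto' 0 0 (zero_mul v)
  have hsmall : ∀ᶠ δ in 𝓝 (0 : ℝ), δ ≤ 1 ∧ ∀ m ∈ s, δ * v < ε m :=
    (eventually_le_nhds one_pos).and <|
      (eventually_all_finset s).2 fun m hm => hv.eventually (gt_mem_nhds (hε m hm))
  obtain ⟨δ, ⟨hδ1, hδε⟩, hδ⟩ :=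
    ((hsmall.filter_mono (nhdsWithin_le_nhds (s := Ioi 0))).and self_mem_nhdsWithin).exists
  exact ⟨δ, hδ, hδ1, hδε⟩

section TopologicalVectorSpaces

theorem LinearMap.apply_mem_of_mem_convexHull {𝕜 E F G : Type*} [CommSemiring 𝕜] [PartialOrder 𝕜]
    [AddCommMonoid E] [AddCommMonoid F] [AddCommMonoid G] [Module 𝕜 E] [Module 𝕜 F]
    [Module 𝕜 G] (f : E →ₗ[𝕜] F →ₗ[𝕜] G) {s : Set E} {t : Set F} {W : Set G}
    (hW : Convex 𝕜 W) (h : ∀ x ∈ s, ∀ y ∈ t, f x y ∈ W) {x : E} {y : F}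
    (hx : x ∈ convexHull 𝕜 s) (hy : y ∈ convexHull 𝕜 t) : f x y ∈ W := by
  have hsy : ∀ x ∈ s, f x y ∈ W := fun x hx =>
    convexHull_min (h x hx) (hW.linear_preimage (f x)) hy
  exact convexHull_min hsy (hW.linear_preimage (f.flip y)) hx

variable {𝕜 E F G : Type*} [NontriviallyNormedField 𝕜] [AddCommGroup E] [Module 𝕜 E]
  [TopologicalSpace E] [AddCommGroup F] [Module 𝕜 F] [TopologicalSpace F] [AddCommGroup G]
  [Module 𝕜 G] [TopologicalSpace G]

/-- Write `f x y = f (t • x) (t⁻¹ • y)` with `t • x` close to `0`. -/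
theorem LinearMap.continuousAt_apply_zero [ContinuousSMul 𝕜 E] [ContinuousConstSMul 𝕜 F]
    (f : E →ₗ[𝕜] F →ₗ[𝕜] G)
    (hf : ContinuousAt (fun p : E × F => f p.1 p.2) 0) (x : E) : ContinuousAt (f x) 0 := by
  intro W hW
  rw [map_zero] at hW
  obtain ⟨U, hU, V, hV, hUV⟩ := mem_nhds_prod_iff.1 (hf (by simpa using hW))
  have hx : ∀ᶠ t in 𝓝[≠] (0 : 𝕜), t • x ∈ U :=
    nhdsWithin_le_nhds ((continuous_id.smul continuous_const).continuousAt.preimage_mem_nhds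
      (by simpa using hU))
  obtain ⟨t, htU, ht⟩ := (hx.and self_mem_nhdsWithin).exists
  have hV' : {y | t⁻¹ • y ∈ V} ∈ 𝓝 (0 : F) :=
    (continuous_const_smul t⁻¹).continuousAt.preimage_mem_nhds (by simpa using hV)
  refine Filter.mem_map.2 (mem_of_superset hV' fun y hy => ?_)
  have hxy : f (t • x) (t⁻¹ • y) = f x y := by
    rw [LinearMap.map_smul₂, map_smul, smul_smul, mul_inv_cancel₀ ht, one_smul]
  simpa only [mem_preimage, hxy] using hUV (mk_mem_prod htU hy)

theorem LinearMap.continuous_of_continuousAt_zero₂ [IsTopologicalAddGroup E]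
    [ContinuousSMul 𝕜 E] [IsTopologicalAddGroup F] [ContinuousSMul 𝕜 F] [ContinuousAdd G]
    (f : E →ₗ[𝕜] F →ₗ[𝕜] G)
    (hf : ContinuousAt (fun p : E × F => f p.1 p.2) 0) : Continuous fun p : E × F => f p.1 p.2 :=
  _root_.continuous_of_continuousAt_zero₂ (LinearMap.toAddMonoidHom'.comp f.toAddMonoidHom) hf
    (f.continuousAt_apply_zero hf) (f.flip.continuousAt_apply_zero (hf.comp_of_eq continuous_swap.continuousAt rfl))

end TopologicalVectorSpaces

section GaugeTopology

variable {E : Type*} [AddCommGroup E] [Module ℝ E] {U : Set E}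

theorem continuous_of_withSeminorms_gaugeSeminorm (hbal : Balanced ℝ U) (hconv : Convex ℝ U)
    (habs : Absorbent ℝ U) [τ : TopologicalSpace E]
    (hp : WithSeminorms fun _ : Unit => gaugeSeminorm hbal hconv habs)
    {H : Type*} [AddCommGroup H] [TopologicalSpace H] [IsTopologicalAddGroup H] (f : H →+ E)
    (hf : ∀ ε : ℝ, 0 < ε → f ⁻¹' (ε • U) ∈ 𝓝 0) : Continuous f := by
  have := hp.topologicalAddGroup
  refine continuous_of_continuousAt_zero f ?_
  rw [ContinuousAt, map_zero, hp.tendsto_nhds]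
  intro _ ε hε
  filter_upwards [hf (ε / 2) (half_pos hε)] with x hx
  rw [sub_zero, gaugeSeminorm_toFun]
  exact (gauge_le_of_mem (half_pos hε).le hx).trans_lt (half_lt_self hε)

theorem mem_nhds_zero_of_withSeminorms_gaugeSeminorm (hbal : Balanced ℝ U) (hconv : Convex ℝ U)
    (habs : Absorbent ℝ U) [τ : TopologicalSpace E]
    (hp : WithSeminorms fun _ : Unit => gaugeSeminorm hbal hconv habs) : U ∈ 𝓝 0 := by
  refine mem_of_superset ?_ (setOfPred_gauge_lt_one_subset_self hconv habs.zero_mem habs)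
  exact (isOpen_lt (hp.continuous_seminorm ()) continuous_const).mem_nhds (by simp)

/-- The gauge of `U` defines a locally convex topology in which every `f i` is continuous. -/
theorem mem_nhds_zero_of_forall_preimage_smul_mem_nhds (hbal : Balanced ℝ U)
    (hconv : Convex ℝ U) (habs : Absorbent ℝ U) [τ : TopologicalSpace E] {ι : Type*}
    {F : ι → Type*} [∀ i, AddCommGroup (F i)] [tF : ∀ i, TopologicalSpace (F i)]
    [hF : ∀ i, IsTopologicalAddGroup (F i)] (f : ∀ i, F i →+ E)
    (hfinest : ∀ t : TopologicalSpace E, @IsTopologicalAddGroup E t _ →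
      @ContinuousSMul ℝ E _ _ t → @LocallyConvexSpace ℝ E _ _ _ _ t →
      (∀ i, Continuous[_, t] (f i)) → τ ≤ t)
    (hf : ∀ i, ∀ ε : ℝ, 0 < ε → f i ⁻¹' (ε • U) ∈ 𝓝 0) : U ∈ 𝓝 0 := by
  let p : SeminormFamily ℝ E Unit := fun _ => gaugeSeminorm hbal hconv habs
  let t : TopologicalSpace E := p.moduleFilterBasis.topology
  have hp : WithSeminorms (topology := t) p := ⟨rfl⟩
  have hτt : τ ≤ t := hfinest t hp.topologicalAddGroup hp.continuousSMul
    hp.toLocallyConvexSpace fun i =>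
      continuous_of_withSeminorms_gaugeSeminorm hbal hconv habs (τ := t) hp (f i) (hf i)
  exact nhds_mono hτt (mem_nhds_zero_of_withSeminorms_gaugeSeminorm hbal hconv habs (τ := t) hp)

end GaugeTopology

section PartialDerivatives

variable {n : ℕ}

theorem pderivI_smul (i : Fin n) (c : ℝ) (f : (Fin n → ℝ) → ℝ) :
    pderivI n i (c • f) = c • pderivI n i f := by
  ext x
  simp [pderivI, fderiv_const_smul_field]

theorem mapsTo_pderivI_Crc (i : Fin n) (Ω : Set (Fin n → ℝ)) :
    MapsTo (pderivI n i) (Crc n ⊤ Ω) (Crc n ⊤ Ω) := fun f hf =>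
  ⟨(hf.1.fderiv_right (by norm_num)).clm_apply contDiff_const, hf.2.1.fderiv_apply (𝕜 := ℝ) _,
    (tsupport_fderiv_apply_subset ℝ _).trans hf.2.2⟩

theorem pderivMulti_zero (f : (Fin n → ℝ) → ℝ) : pderivMulti n 0 f = f := by
  unfold pderivMulti
  induction List.finRange n with
  | nil => rfl
  | cons i l ih => exact ih

theorem mapsTo_pderivMulti {P : Set ((Fin n → ℝ) → ℝ)} (hP : ∀ i, MapsTo (pderivI n i) P P)
    (α : Fin n → ℕ) : MapsTo (pderivMulti n α) P P := by
  intro f hf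
  unfold pderivMulti
  induction List.finRange n with
  | nil => exact hf
  | cons i l ih => exact (hP i).iterate (α i) ih

theorem pderivMulti_comm {P : Set ((Fin n → ℝ) → ℝ)} (hP : ∀ i, MapsTo (pderivI n i) P P)
    {Φ : ((Fin n → ℝ) → ℝ) → (Fin n → ℝ) → ℝ}
    (hΦ : ∀ i, ∀ f ∈ P, pderivI n i (Φ f) = Φ (pderivI n i f))
    (α : Fin n → ℕ) {f : (Fin n → ℝ) → ℝ} (hf : f ∈ P) :
    pderivMulti n α (Φ f) = Φ (pderivMulti n α f) := by
  have iterate_comm : ∀ i m, ∀ g ∈ P, (pderivI n i)^[m] (Φ g) = Φ ((pderivI n i)^[m] g) := by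
    intro i m
    induction m with
    | zero => intro g _; rfl
    | succ m ih =>
      intro g hg
      rw [iterate_succ_apply', iterate_succ_apply', ih g hg, hΦ i _ ((hP i).iterate m hg)]
  suffices ∀ l : List (Fin n), l.foldr (fun i g => (pderivI n i)^[α i] g) f ∈ P ∧
      l.foldr (fun i g => (pderivI n i)^[α i] g) (Φ f) =
        Φ (l.foldr (fun i g => (pderivI n i)^[α i] g) f) from (this _).2
  intro l
  induction l with
  | nil => exact ⟨hf, rfl⟩
  | cons i l ih =>
    exact ⟨(hP i).iterate (α i) ih.1, by
      rw [List.foldr_cons, List.foldr_cons, ih.2, iterate_comm i (α i) _ ih.1]⟩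

theorem pderivMulti_smul (α : Fin n → ℕ) (c : ℝ) (f : (Fin n → ℝ) → ℝ) :
    pderivMulti n α (c • f) = c • pderivMulti n α f :=
  pderivMulti_comm (P := univ) (fun _ => mapsTo_univ _ _) (fun i f _ => pderivI_smul i c f) α
    (mem_univ f)

theorem pderivMulti_mem_Crc {Ω : Set (Fin n → ℝ)} (α : Fin n → ℕ) {f : (Fin n → ℝ) → ℝ}
    (hf : f ∈ Crc n ⊤ Ω) : pderivMulti n α f ∈ Crc n ⊤ Ω :=
  mapsTo_pderivMulti (fun i => mapsTo_pderivI_Crc i Ω) α hf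

end PartialDerivatives

section CrNorm

variable {n : ℕ} {Ω : Set (Fin n → ℝ)} {f : (Fin n → ℝ) → ℝ}

theorem bddAbove_crNorm_set (k : ℕ) (hf : f ∈ Crc n ⊤ Ω) :
    BddAbove {c | ∃ (α : Fin n → ℕ) (x : Fin n → ℝ), (∑ i, α i) ≤ k ∧
      c = |pderivMulti n α f x|} := by
  have hfin : (pi univ fun _ : Fin n => Iic k).Finite := Set.Finite.pi fun _ => finite_Iic k
  refine ((hfin.bddAbove_biUnion (S := fun α => range fun x => |pderivMulti n α f x|)).2
    fun α _ => ?_).mono ?_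
  · have hα := pderivMulti_mem_Crc α hf
    exact hα.1.continuous.abs.bddAbove_range_of_hasCompactSupport hα.2.1.abs
  · rintro _ ⟨α, x, hα, rfl⟩
    exact mem_biUnion (fun i _ => (Finset.single_le_sum (fun j _ => Nat.zero_le (α j))
      (Finset.mem_univ i)).trans hα) (mem_range_self x)

theorem abs_pderivMulti_le_crNorm {k : ℕ} (hf : f ∈ Crc n ⊤ Ω) {α : Fin n → ℕ}
    (hα : (∑ i, α i) ≤ k) (x : Fin n → ℝ) : |pderivMulti n α f x| ≤ crNorm n k f :=
  le_csSup (bddAbove_crNorm_set k hf) ⟨α, x, hα, rfl⟩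

theorem abs_le_crNorm (k : ℕ) (hf : f ∈ Crc n ⊤ Ω) (x : Fin n → ℝ) : |f x| ≤ crNorm n k f := by
  simpa [pderivMulti_zero] using abs_pderivMulti_le_crNorm hf (α := 0) (by simp) x

theorem crNorm_nonneg (k : ℕ) (f : (Fin n → ℝ) → ℝ) : 0 ≤ crNorm n k f :=
  Real.sSup_nonneg (by rintro _ ⟨α, x, -, rfl⟩; positivity)

theorem crNorm_le {k : ℕ} {B : ℝ} (hB : 0 ≤ B)
    (h : ∀ (α : Fin n → ℕ) (x : Fin n → ℝ), (∑ i, α i) ≤ k → |pderivMulti n α f x| ≤ B) :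
    crNorm n k f ≤ B :=
  Real.sSup_le (by rintro _ ⟨α, x, hα, rfl⟩; exact h α x hα) hB

theorem crNorm_mono {k k' : ℕ} (hf : f ∈ Crc n ⊤ Ω) (hk : k ≤ k') :
    crNorm n k f ≤ crNorm n k' f :=
  crNorm_le (crNorm_nonneg _ _) fun _ x hα => abs_pderivMulti_le_crNorm hf (hα.trans hk) x

theorem crNorm_smul_le (k : ℕ) (hf : f ∈ Crc n ⊤ Ω) (c : ℝ) :
    crNorm n k (c • f) ≤ |c| * crNorm n k f :=
  crNorm_le (mul_nonneg (abs_nonneg c) (crNorm_nonneg _ _)) fun α x hα => by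
    rw [pderivMulti_smul, Pi.smul_apply, smul_eq_mul, abs_mul]
    exact mul_le_mul_of_nonneg_left (abs_pderivMulti_le_crNorm hf hα x) (abs_nonneg c)

end CrNorm

section Convolution

theorem convolution_mul_comm {G : Type*} [AddCommGroup G] [MeasurableSpace G] [MeasurableNeg G]
    [MeasurableAdd G] {μ : Measure G} [SFinite μ] [μ.IsAddLeftInvariant] [μ.IsNegInvariant]
    (f g : G → ℝ) :
    f ⋆[ContinuousLinearMap.mul ℝ ℝ, μ] g = g ⋆[ContinuousLinearMap.mul ℝ ℝ, μ] f := by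
  rw [← convolution_flip]
  congr 1
  ext
  simp

theorem tsupport_convolution_subset_closedBall {G E E' F : Type*} [NormedAddCommGroup G]
    [MeasurableSpace G] {μ : Measure G} [NormedAddCommGroup E] [NormedAddCommGroup E']
    [NormedAddCommGroup F] [NormedSpace ℝ E] [NormedSpace ℝ E'] [NormedSpace ℝ F]
    (L : E →L[ℝ] E' →L[ℝ] F) {f : G → E} {g : G → E'} {r s : ℝ}
    (hf : tsupport f ⊆ closedBall 0 r) (hg : tsupport g ⊆ closedBall 0 s) :
    tsupport (f ⋆[L, μ] g) ⊆ closedBall 0 (r + s) := by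
  refine closure_minimal (fun x hx => ?_) isClosed_closedBall
  obtain ⟨a, ha, b, hb, rfl⟩ := support_convolution_subset L hx
  rw [mem_closedBall_zero_iff] at *
  exact (norm_add_le a b).trans (add_le_add
    (mem_closedBall_zero_iff.1 (hf (subset_tsupport f ha)))
    (mem_closedBall_zero_iff.1 (hg (subset_tsupport g hb))))

theorem abs_convolution_mul_le {G : Type*} [AddGroup G] [MeasurableSpace G] {μ : Measure G}
    {f g : G → ℝ} {s : Set G} (hs : μ s < ⊤) (hf : support f ⊆ s) {a b : ℝ}
    (ha : ∀ y, |f y| ≤ a) (hb : ∀ y, |g y| ≤ b) (x : G) :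
    |(f ⋆[ContinuousLinearMap.mul ℝ ℝ, μ] g) x| ≤ a * b * μ.real s := by
  have hzero : ∀ t ∉ s, f t * g (x - t) = 0 := fun t ht => by
    rw [notMem_support.1 (mt (@hf t) ht), zero_mul]
  rw [convolution_mul, ← setIntegral_eq_integral_of_forall_compl_eq_zero hzero,
    ← Real.norm_eq_abs]
  refine norm_setIntegral_le_of_norm_le_const hs fun t _ => ?_
  rw [Real.norm_eq_abs, abs_mul]
  exact mul_le_mul (ha t) (hb (x - t)) (abs_nonneg _) ((abs_nonneg _).trans (ha t))

variable {n : ℕ}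

theorem pderivI_convolution_right {γ η : (Fin n → ℝ) → ℝ} (hγ : LocallyIntegrable γ)
    (hη : ContDiff ℝ 1 η) (hηc : HasCompactSupport η) (i : Fin n) :
    pderivI n i (γ ⋆[ContinuousLinearMap.mul ℝ ℝ] η) =
      γ ⋆[ContinuousLinearMap.mul ℝ ℝ] pderivI n i η := by
  ext x
  rw [pderivI, (hηc.hasFDerivAt_convolution_right _ hγ hη x).fderiv,
    convolution_precompR_apply _ hγ (hηc.fderiv ℝ) (hη.continuous_fderiv one_ne_zero)]
  rfl

theorem pderivMulti_convolution_left {Ω : Set (Fin n → ℝ)} {γ η : (Fin n → ℝ) → ℝ}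
    (hγ : γ ∈ Crc n ⊤ Ω) (hη : LocallyIntegrable η) (α : Fin n → ℕ) :
    pderivMulti n α (γ ⋆[ContinuousLinearMap.mul ℝ ℝ] η) =
      pderivMulti n α γ ⋆[ContinuousLinearMap.mul ℝ ℝ] η := by
  rw [convolution_mul_comm, convolution_mul_comm _ η]
  exact pderivMulti_comm (fun i => mapsTo_pderivI_Crc i Ω)
    (fun i _ hf => pderivI_convolution_right hη (hf.1.of_le (by exact_mod_cast le_top)) hf.2.1 i)
    α hγ

theorem crNorm_convolution_le (k : ℕ) {r : ℝ} {Ω : Set (Fin n → ℝ)} {γ η : (Fin n → ℝ) → ℝ}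
    (hγ : γ ∈ Crc n ⊤ (closedBall 0 r)) (hη : η ∈ Crc n ⊤ Ω) :
    crNorm n k (γ ⋆[ContinuousLinearMap.mul ℝ ℝ] η) ≤
      crNorm n k γ * crNorm n 0 η * volume.real (closedBall (0 : Fin n → ℝ) r) := by
  refine crNorm_le (mul_nonneg (mul_nonneg (crNorm_nonneg _ _) (crNorm_nonneg _ _))
    measureReal_nonneg) fun α x hα => ?_
  rw [pderivMulti_convolution_left hγ hη.1.continuous.locallyIntegrable]
  exact abs_convolution_mul_le measure_closedBall_lt_top
    ((subset_tsupport _).trans (pderivMulti_mem_Crc α hγ).2.2)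
    (abs_pderivMulti_le_crNorm hγ hα) (abs_le_crNorm 0 hη) x

theorem convolutionExists_of_mem_Crc {Ω : Set (Fin n → ℝ)} {γ η : (Fin n → ℝ) → ℝ}
    (hγ : Continuous γ) (hη : η ∈ Crc n ⊤ Ω) :
    ConvolutionExists γ η (ContinuousLinearMap.mul ℝ ℝ) volume :=
  hη.2.1.convolutionExists_right _ hγ.locallyIntegrable hη.1.continuous

noncomputable def convolutionCrc (n : ℕ) :
    Crc n ⊤ univ →ₗ[ℝ] Crc n ⊤ univ →ₗ[ℝ] Crc n ⊤ univ :=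
  LinearMap.mk₂ ℝ (fun φ ψ => ⟨φ.1 ⋆[ContinuousLinearMap.mul ℝ ℝ] ψ.1, conv_mem_Crc φ.2 ψ.2⟩)
    (fun φ φ' ψ => Subtype.ext <|
      (convolutionExists_of_mem_Crc φ.2.1.continuous ψ.2).add_distrib
        (convolutionExists_of_mem_Crc φ'.2.1.continuous ψ.2))
    (fun _ _ _ => Subtype.ext smul_convolution)
    (fun φ ψ ψ' => Subtype.ext <|
      (convolutionExists_of_mem_Crc φ.2.1.continuous ψ.2).distrib_add
        (convolutionExists_of_mem_Crc φ.2.1.continuous ψ'.2))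
    (fun _ _ _ => Subtype.ext convolution_smul)

theorem convolutionCrc_comm (φ ψ : Crc n ⊤ univ) : convolutionCrc n φ ψ = convolutionCrc n ψ φ :=
  Subtype.ext (convolution_mul_comm _ _)

end Convolution
section TestFunctions

variable {n : ℕ}

noncomputable def inclusionCrc {K : Set (Fin n → ℝ)} (hK : IsCompact K) :
    CrK n ⊤ K →+ Crc n ⊤ univ :=
  AddMonoidHom.mk' (fun γ => ⟨γ.1, crK_le_crc hK (subset_univ K) γ.2⟩) fun _ _ => rfl

noncomputable def crNormBall (n k : ℕ) (K : Set (Fin n → ℝ)) (δ : ℝ) : Set (Crc n ⊤ univ) :=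
  {φ | tsupport φ.1 ⊆ K ∧ crNorm n k φ < δ}

theorem tsupport_smul_subset_Crc (c : ℝ) (φ : Crc n ⊤ univ) :
    tsupport (c • φ).1 ⊆ tsupport φ.1 :=
  tsupport_smul_subset_right (fun _ => c) φ.1

theorem balanced_crNormBall (k : ℕ) (K : Set (Fin n → ℝ)) (δ : ℝ) :
    Balanced ℝ (crNormBall n k K δ) := by
  rintro a ha _ ⟨φ, hφ, rfl⟩
  refine ⟨(tsupport_smul_subset_Crc a φ).trans hφ.1, (crNorm_smul_le k φ.2 a).trans_lt ?_⟩
  exact (mul_le_of_le_one_left (crNorm_nonneg _ _) ha).trans_lt hφ.2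

theorem absorbent_iUnion_crNormBall (κ : ℕ → ℕ) {δ : ℕ → ℝ} (hδ : ∀ i, 0 < δ i) :
    Absorbent ℝ (⋃ i : ℕ, crNormBall n (κ i) (closedBall 0 i) (δ i)) := by
  refine absorbent_iff_inv_smul.2 fun φ => ?_
  obtain ⟨i, hi⟩ := φ.2.2.1.isCompact.exists_nat_subset_closedBall 0
  have hsmall : Tendsto (fun c : ℝ => |c⁻¹| * crNorm n (κ i) φ) (Bornology.cobounded ℝ) (𝓝 0) := by
    simpa using tendsto_inv₀_cobounded.abs.mul_const (crNorm n (κ i) φ)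
  filter_upwards [hsmall.eventually (gt_mem_nhds (hδ i))] with c hc
  exact mem_iUnion.2 ⟨i, (tsupport_smul_subset_Crc _ φ).trans hi,
    (crNorm_smul_le _ φ.2 _).trans_lt hc⟩

theorem exists_crNormBall_subset {K : Set (Fin n → ℝ)} (hK : IsCompact K)
    [TopologicalSpace (CrK n ⊤ K)]
    (hbasis : (𝓝 (0 : CrK n ⊤ K)).HasBasis (fun kε : ℕ × ℝ => 0 < kε.2)
      (fun kε => {γ : CrK n ⊤ K | crNorm n kε.1 γ < kε.2}))
    [TopologicalSpace (Crc n ⊤ univ)] (hcont : Continuous (inclusionCrc hK))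
    {W : Set (Crc n ⊤ univ)} (hW : W ∈ 𝓝 0) :
    ∃ k ε, 0 < ε ∧ crNormBall n k K ε ⊆ W := by
  obtain ⟨⟨k, ε⟩, hε, hsub⟩ :=
    hbasis.mem_iff.1 (hcont.continuousAt.preimage_mem_nhds (by rwa [map_zero]))
  exact ⟨k, ε, hε, fun φ hφ => @hsub ⟨φ.1, φ.2.1, hφ.1⟩ hφ.2⟩

theorem preimage_smul_mem_nhds_of_crNormBall_subset {K : Set (Fin n → ℝ)} (hK : IsCompact K)
    [TopologicalSpace (CrK n ⊤ K)]
    (hbasis : (𝓝 (0 : CrK n ⊤ K)).HasBasis (fun kε : ℕ × ℝ => 0 < kε.2)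
      (fun kε => {γ : CrK n ⊤ K | crNorm n kε.1 γ < kε.2}))
    {U : Set (Crc n ⊤ univ)} {k : ℕ} {δ : ℝ} (hδ : 0 < δ) (hU : crNormBall n k K δ ⊆ U)
    {ε : ℝ} (hε : 0 < ε) : inclusionCrc hK ⁻¹' (ε • U) ∈ 𝓝 0 := by
  refine hbasis.mem_iff.2 ⟨(k, ε * δ), mul_pos hε hδ, fun γ hγ => ?_⟩
  refine (mem_smul_set_iff_inv_smul_mem₀ hε.ne' _ _).2 (hU ⟨?_, ?_⟩)
  · exact (tsupport_smul_subset_Crc _ _).trans γ.2.2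
  · calc crNorm n k (ε⁻¹ • γ.1) ≤ |ε⁻¹| * crNorm n k γ.1 := crNorm_smul_le k (inclusionCrc hK γ).2 _
      _ < |ε⁻¹| * (ε * δ) := mul_lt_mul_of_pos_left hγ (by positivity)
      _ = δ := by rw [abs_of_pos (inv_pos.2 hε), inv_mul_cancel_left₀ hε.ne']

theorem convexHull_iUnion_crNormBall_mem_nhds
    [tK : ∀ K : Set (Fin n → ℝ), TopologicalSpace (CrK n ⊤ K)]
    (htK : ∀ K : Set (Fin n → ℝ), IsCompact K →
      @IsTopologicalAddGroup _ (tK K) _ ∧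
      (𝓝 (0 : CrK n ⊤ K)).HasBasis (fun kε : ℕ × ℝ => 0 < kε.2)
        (fun kε => {γ : CrK n ⊤ K | crNorm n kε.1 γ < kε.2}))
    [tc : TopologicalSpace (Crc n ⊤ univ)]
    (hfinest : ∀ t : TopologicalSpace (Crc n ⊤ univ), @IsTopologicalAddGroup _ t _ →
      @ContinuousSMul ℝ _ _ _ t → @LocallyConvexSpace ℝ _ _ _ _ _ t →
      (∀ (K : Set (Fin n → ℝ)) (hK : IsCompact K), Continuous[tK K, t] (inclusionCrc hK)) →
      tc ≤ t)
    (κ : ℕ → ℕ) {δ : ℕ → ℝ} (hδ : ∀ i, 0 < δ i) :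
    convexHull ℝ (⋃ i : ℕ, crNormBall n (κ i) (closedBall 0 i) (δ i)) ∈ 𝓝 0 := by
  have hbal : Balanced ℝ (⋃ i : ℕ, crNormBall n (κ i) (closedBall 0 i) (δ i)) :=
    balanced_iUnion fun _ => balanced_crNormBall _ _ _
  refine mem_nhds_zero_of_forall_preimage_smul_mem_nhds (E := Crc n ⊤ univ)
    (F := fun K : {K : Set (Fin n → ℝ) // IsCompact K} => CrK n ⊤ K.1) (tF := fun K => tK K.1)
    (hF := fun K => (htK K.1 K.2).1) hbal.convexHull (convex_convexHull ℝ _)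
    ((absorbent_iUnion_crNormBall κ hδ).mono (subset_convexHull ℝ _)) (fun K => inclusionCrc K.2)
    (fun t h1 h2 h3 hcont => hfinest t h1 h2 h3 fun K hK => hcont ⟨K, hK⟩) fun K ε hε => ?_
  obtain ⟨i, hi⟩ := K.2.exists_nat_subset_closedBall 0
  have hball : crNormBall n (κ i) K (δ i) ⊆
      convexHull ℝ (⋃ i : ℕ, crNormBall n (κ i) (closedBall 0 i) (δ i)) := fun φ hφ =>
    subset_convexHull ℝ _ (mem_iUnion.2 ⟨i, hφ.1.trans hi, hφ.2⟩)
  exact preimage_smul_mem_nhds_of_crNormBall_subset K.2 (htK K.1 K.2).2 (hδ i) hball hε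

theorem convolutionCrc_mem_crNormBall {a b m : ℕ} {r s δ δ' η : ℝ} (hm : m ≤ a) (hδ' : δ' ≤ 1)
    (hη : δ * volume.real (closedBall (0 : Fin n → ℝ) r) < η) {φ ψ : Crc n ⊤ univ}
    (hφ : φ ∈ crNormBall n a (closedBall 0 r) δ) (hψ : ψ ∈ crNormBall n b (closedBall 0 s) δ') :
    convolutionCrc n φ ψ ∈ crNormBall n m (closedBall 0 (r + s)) η := by
  refine ⟨tsupport_convolution_subset_closedBall _ hφ.1 hψ.1, ?_⟩
  have hφr : φ.1 ∈ Crc n ⊤ (closedBall 0 r) := ⟨φ.2.1, φ.2.2.1, hφ.1⟩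
  have hφδ : crNorm n m φ ≤ δ := ((crNorm_mono φ.2 hm).trans_lt hφ.2).le
  have hψ1 : crNorm n 0 ψ ≤ 1 := ((crNorm_mono ψ.2 (Nat.zero_le b)).trans_lt hψ.2).le.trans hδ'
  calc crNorm n m (convolutionCrc n φ ψ)
      ≤ crNorm n m φ * crNorm n 0 ψ * volume.real (closedBall (0 : Fin n → ℝ) r) :=
        crNorm_convolution_le m hφr ψ.2
    _ ≤ δ * 1 * volume.real (closedBall (0 : Fin n → ℝ) r) :=
        mul_le_mul_of_nonneg_right (mul_le_mul hφδ hψ1 (crNorm_nonneg _ _)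
          ((crNorm_nonneg _ _).trans hφδ)) measureReal_nonneg
    _ < η := by rwa [mul_one]

theorem convolutionCrc_mem_of_mem_iUnion_crNormBall {k κ : ℕ → ℕ} {ε δ : ℕ → ℝ}
    {W : Set (Crc n ⊤ univ)} (hW : ∀ m, crNormBall n (k m) (closedBall 0 m) (ε m) ⊆ W)
    (hκ : ∀ i, ∀ m ≤ 2 * i, k m ≤ κ i) (hδ : ∀ i, δ i ≤ 1)
    (hδε : ∀ i, ∀ m ≤ 2 * i, δ i * volume.real (closedBall (0 : Fin n → ℝ) i) < ε m) :
    ∀ φ ∈ ⋃ i : ℕ, crNormBall n (κ i) (closedBall 0 i) (δ i),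
      ∀ ψ ∈ ⋃ i : ℕ, crNormBall n (κ i) (closedBall 0 i) (δ i), convolutionCrc n φ ψ ∈ W := by
  have hle : ∀ i j, j ≤ i → ∀ φ ∈ crNormBall n (κ i) (closedBall 0 i) (δ i),
      ∀ ψ ∈ crNormBall n (κ j) (closedBall 0 j) (δ j), convolutionCrc n φ ψ ∈ W :=
    fun i j hji φ hφ ψ hψ => hW (i + j) <| by
      simpa only [Nat.cast_add] using convolutionCrc_mem_crNormBall (hκ i (i + j) (by omega))
        (hδ j) (hδε i (i + j) (by omega)) hφ hψ
  simp only [mem_iUnion]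
  rintro φ ⟨i, hφ⟩ ψ ⟨j, hψ⟩
  rcases le_total j i with hji | hij
  · exact hle i j hji φ hφ ψ hψ
  · exact convolutionCrc_comm ψ φ ▸ hle j i hij ψ hψ φ hφ

end TestFunctions

/-- Corollary (Hirai et al.): the convolution map
`C^∞_c(ℝⁿ) × C^∞_c(ℝⁿ) → C^∞_c(ℝⁿ)`, `(γ, η) ↦ γ ∗ η`, is continuous, where
`C^∞_c(ℝⁿ)` carries the locally convex direct limit topology of the subspaces
`C^∞_K(ℝⁿ)` over compact sets `K`. -/
theorem convolution_testFunctions_continuous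
    (n : ℕ)
    -- topologies on the spaces `C^∞_K(ℝⁿ)`, defined by the norms `‖·‖_k`:
    [tK : ∀ K : Set (Fin n → ℝ), TopologicalSpace (CrK n ⊤ K)]
    (htK : ∀ K : Set (Fin n → ℝ), IsCompact K →
      @IsTopologicalAddGroup _ (tK K) _ ∧
      (𝓝 (0 : CrK n ⊤ K)).HasBasis
        (fun kε : ℕ × ℝ => 0 < kε.2)
        (fun kε => {γ : CrK n ⊤ K | crNorm n kε.1 γ < kε.2}))
    -- `C^∞_c(ℝⁿ)` carries the locally convex direct limit topology:
    [tc : TopologicalSpace (Crc n ⊤ Set.univ)] [IsTopologicalAddGroup (Crc n ⊤ Set.univ)]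
    [ContinuousSMul ℝ (Crc n ⊤ Set.univ)] [LocallyConvexSpace ℝ (Crc n ⊤ Set.univ)]
    (hincl : ∀ (K : Set (Fin n → ℝ)) (h1 : IsCompact K),
      Continuous fun γ : CrK n ⊤ K =>
        (⟨γ.1, crK_le_crc h1 (Set.subset_univ K) γ.2⟩ : Crc n ⊤ Set.univ))
    (hfinest : ∀ t' : TopologicalSpace (Crc n ⊤ Set.univ),
      @IsTopologicalAddGroup _ t' _ → @ContinuousSMul ℝ _ _ _ t' →
      @LocallyConvexSpace ℝ _ _ _ _ _ t' →
      (∀ (K : Set (Fin n → ℝ)) (h1 : IsCompact K),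
        Continuous[tK K, t'] fun γ : CrK n ⊤ K =>
          (⟨γ.1, crK_le_crc h1 (Set.subset_univ K) γ.2⟩ : Crc n ⊤ Set.univ)) →
      tc ≤ t') :
    Continuous fun p : Crc n ⊤ Set.univ × Crc n ⊤ Set.univ =>
      (⟨MeasureTheory.convolution p.1 p.2 (ContinuousLinearMap.mul ℝ ℝ) volume,
        conv_mem_Crc p.1.2 p.2.2⟩ : Crc n ⊤ Set.univ) := by
  refine (convolutionCrc n).continuous_of_continuousAt_zero₂ fun W hW => ?_
  obtain ⟨W', ⟨hW'0, hW'c⟩, hW'W⟩ :=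
    (LocallyConvexSpace.convex_basis_zero ℝ (Crc n ⊤ univ)).mem_iff.1 (by simpa using hW)
  choose k ε hε hkε using fun m : ℕ => exists_crNormBall_subset (isCompact_closedBall 0 m)
    (htK _ (isCompact_closedBall 0 m)).2 (hincl _ (isCompact_closedBall 0 m)) hW'0
  choose δ hδ hδ1 hδε using fun i : ℕ => exists_pos_le_one_forall_mul_lt (Finset.Iic (2 * i))
    (fun m _ => hε m) (volume.real (closedBall (0 : Fin n → ℝ) i))
  let κ i := (Finset.Iic (2 * i)).sup k
  have hU := convexHull_iUnion_crNormBall_mem_nhds htK hfinest κ hδ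
  refine mem_map.2 (mem_of_superset (prod_mem_nhds hU hU) fun p hp => hW'W ?_)
  refine (convolutionCrc n).apply_mem_of_mem_convexHull hW'c ?_ hp.1 hp.2
  exact convolutionCrc_mem_of_mem_iUnion_crNormBall hkε
    (fun i m hm => Finset.le_sup (Finset.mem_Iic.2 hm)) hδ1
    (fun i m hm => hδε i m (Finset.mem_Iic.2 hm))
end

section
/- Let $E$ be a locally convex space such that the tensor algebra $T_\pi(E) = \bigoplus_{j\in\mathbb{N}_0}T^j_\pi(E)$ is a topological algebra (i.e., its multiplication is continuous). Then $E$ satisfies the countable upper bound condition. -/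
open Topology Filter

/-- `(T, τ)` is the *projective* tensor product `E₁ ⊗_π ⋯ ⊗_π E_j`: `τ` is an
algebraically universal multilinear map and `tT` is the finest *locally convex*
vector topology making `τ` continuous. -/
def IsPiTensorProduct {ι : Type*} [Fintype ι] [DecidableEq ι]
    {E : ι → Type*} [∀ i, AddCommGroup (E i)] [∀ i, Module ℝ (E i)]
    (tE : ∀ i, TopologicalSpace (E i))
    {T : Type*} [AddCommGroup T] [Module ℝ T] (tT : TopologicalSpace T)
    (τ : MultilinearMap ℝ E T) : Prop :=
  (∀ (G : Type*) [AddCommGroup G] [Module ℝ G] (f : MultilinearMap ℝ E G),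
      ∃! g : T →ₗ[ℝ] G, g.compMultilinearMap τ = f) ∧
  @IsTopologicalAddGroup T tT _ ∧ @ContinuousSMul ℝ T _ _ tT ∧
  @LocallyConvexSpace ℝ T _ _ _ _ tT ∧
  Continuous[@Pi.topologicalSpace ι E tE, tT] (fun x : ∀ i, E i => τ x) ∧
  ∀ t' : TopologicalSpace T, @IsTopologicalAddGroup T t' _ → @ContinuousSMul ℝ T _ _ t' →
    @LocallyConvexSpace ℝ T _ _ _ _ t' →
    Continuous[@Pi.topologicalSpace ι E tE, t'] (fun x : ∀ i, E i => τ x) → tT ≤ t'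

/-- `tS` is the locally convex direct sum topology on `Π₀ j, T j`: the finest
locally convex vector topology making all inclusions continuous. -/
def IsLcxDirectSumTopology {T : ℕ → Type*} [∀ j, AddCommGroup (T j)]
    [∀ j, Module ℝ (T j)] (tT : ∀ j, TopologicalSpace (T j))
    (tS : TopologicalSpace (Π₀ j, T j)) : Prop :=
  @IsTopologicalAddGroup _ tS _ ∧ @ContinuousSMul ℝ _ _ _ tS ∧
  @LocallyConvexSpace ℝ _ _ _ _ _ tS ∧
  (∀ j, Continuous[tT j, tS] fun x : T j => DFinsupp.single j x) ∧
  ∀ t' : TopologicalSpace (Π₀ j, T j), @IsTopologicalAddGroup _ t' _ →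
    @ContinuousSMul ℝ _ _ _ t' → @LocallyConvexSpace ℝ _ _ _ _ _ t' →
    (∀ j, Continuous[tT j, t'] fun x : T j => DFinsupp.single j x) → tS ≤ t'

/-!
For each `k` choose `a_k` and a continuous functional `g_k` with `g_k a_k = p_k a_k ≠ 0`. The
linear map `Ψ_k : T^{k+1}_π(E) → E`, `x_1 ⊗ ⋯ ⊗ x_{k+1} ↦ g_k(x_1)⋯g_k(x_k) x_{k+1}`, is continuous,
so `p_k ∘ Ψ_k` is a continuous seminorm on `T^{k+1}_π(E)`, and the sum of these over all degrees
is a continuous seminorm `R` on `T_π(E)`. Continuity of the multiplication at `0` yields a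
continuous seminorm `Q` with `R(u v) ≤ Q(u) Q(v)`. For `u = a_k^{⊗k}` and `v = x ∈ E` this reads
`p_k(a_k)^k p_k(x) ≤ Q(a_k^{⊗k}) Q(x)`, so `Q` restricted to `E` dominates every `p_k`.
-/

open PiTensorProduct in
theorem IsPiTensorProduct.exists_linearMap_compMultilinearMap_eq
    {ι : Type*} [Fintype ι] [DecidableEq ι]
    {E : ι → Type*} [∀ i, AddCommGroup (E i)] [∀ i, Module ℝ (E i)]
    {tE : ∀ i, TopologicalSpace (E i)}
    {T : Type*} [AddCommGroup T] [Module ℝ T] {tT : TopologicalSpace T}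
    {τ : MultilinearMap ℝ E T} (hT : IsPiTensorProduct tE tT τ)
    {G : Type*} [AddCommGroup G] [Module ℝ G] (f : MultilinearMap ℝ E G) :
    ∃ g : T →ₗ[ℝ] G, g.compMultilinearMap τ = f := by
  -- `hT` only provides the universal property for targets in one universe; scalar-valued
  -- targets already make `lift τ` injective, and a left inverse of it transports every `f`.
  have hinj : LinearMap.ker (lift τ) = ⊥ := by
    refine (Submodule.eq_bot_iff _).2 fun w hw => ?_
    refine (Module.forall_dual_apply_eq_zero_iff ℝ w).1 fun φ => ?_
    let e : ℝ ≃ₗ[ℝ] ULift ℝ := ULift.moduleEquiv.symm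
    obtain ⟨F, hF, -⟩ :=
      hT.1 (ULift ℝ) (e.toLinearMap.compMultilinearMap (φ.compMultilinearMap (tprod ℝ)))
    have hφ : e.toLinearMap ∘ₗ φ = F ∘ₗ lift τ := ext <| by
      ext z
      simpa using (DFunLike.congr_fun hF z).symm
    simpa [LinearMap.mem_ker.1 hw] using congr(e.symm ($hφ w))
  obtain ⟨L, hL⟩ := (lift τ).exists_leftInverse_of_injective hinj
  refine ⟨lift f ∘ₗ L, MultilinearMap.ext fun z => ?_⟩
  simpa using congr(lift f ($hL (tprod ℝ z)))

theorem Seminorm.exists_strongDual_apply_eq {E : Type*} [AddCommGroup E] [Module ℝ E]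
    [TopologicalSpace E] [PolynormableSpace ℝ E] {p : Seminorm ℝ E} (hp : Continuous p) (a : E) :
    ∃ g : StrongDual ℝ E, g a = p a := by
  let f : E →ₗ.[ℝ] ℝ := LinearPMap.mkSpanSingleton' a (p a) fun c hc => by
    have := congr(p $hc)
    rw [map_smul_eq_mul, map_zero, Real.norm_eq_abs, mul_eq_zero, abs_eq_zero] at this
    rcases this with h | h <;> simp [h]
  have hfp : ∀ x : f.domain, f x ≤ p x := by
    rintro ⟨x, hx⟩
    obtain ⟨c, rfl⟩ := Submodule.mem_span_singleton.1 hx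
    calc f ⟨c • a, hx⟩ = c * p a := LinearPMap.mkSpanSingleton'_apply ..
      _ ≤ |c| * p a := mul_le_mul_of_nonneg_right (le_abs_self c) (apply_nonneg p a)
      _ = p (c • a) := by rw [map_smul_eq_mul, Real.norm_eq_abs]
  obtain ⟨g, hg, -⟩ :=
    Module.Dual.exists_continuous_extension_of_le_seminorm_real f.domain f.toFun hp hfp
  exact ⟨g, (hg ⟨a, Submodule.mem_span_singleton_self a⟩).trans
    (LinearPMap.mkSpanSingleton'_apply_self ..)⟩

theorem LinearMap.continuous_of_finest_locallyConvex
    {X : Type*} [AddCommGroup X] [Module ℝ X] {tX : TopologicalSpace X}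
    {A : Type*} [TopologicalSpace A] {φ : A → X}
    (hmin : ∀ t' : TopologicalSpace X, @IsTopologicalAddGroup X t' _ →
      @ContinuousSMul ℝ X _ _ t' → @LocallyConvexSpace ℝ X _ _ _ _ t' →
      Continuous[_, t'] φ → tX ≤ t')
    {G : Type*} [AddCommGroup G] [Module ℝ G] [TopologicalSpace G]
    [IsTopologicalAddGroup G] [ContinuousSMul ℝ G] [LocallyConvexSpace ℝ G]
    (L : X →ₗ[ℝ] G) (hL : Continuous (L ∘ φ)) :
    Continuous[tX, _] L :=
  continuous_iff_le_induced.2 <| hmin _ (topologicalAddGroup_induced L) (continuousSMul_induced L)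
    (LocallyConvexSpace.induced L) (continuous_induced_rng.2 hL)

theorem Seminorm.continuous_of_finest_locallyConvex
    {X : Type*} [AddCommGroup X] [Module ℝ X] {tX : TopologicalSpace X}
    {ι : Type*} {A : ι → Type*} [∀ i, AddCommGroup (A i)] [∀ i, Module ℝ (A i)]
    [∀ i, TopologicalSpace (A i)] [∀ i, IsTopologicalAddGroup (A i)] {φ : ∀ i, A i →ₗ[ℝ] X}
    (hmin : ∀ t' : TopologicalSpace X, @IsTopologicalAddGroup X t' _ →
      @ContinuousSMul ℝ X _ _ t' → @LocallyConvexSpace ℝ X _ _ _ _ t' →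
      (∀ i, Continuous[_, t'] (φ i)) → tX ≤ t')
    (R : Seminorm ℝ X) (hR : ∀ i, Continuous (R ∘ φ i)) :
    Continuous[tX, _] R := by
  let tR : TopologicalSpace X := SeminormFamily.moduleFilterBasis (fun _ : Unit => R) |>.topology
  have hR' : WithSeminorms (fun _ : Unit => R) := ⟨rfl⟩
  refine continuous_le_dom (hmin tR hR'.topologicalAddGroup hR'.continuousSMul
    hR'.toLocallyConvexSpace fun i => ?_) (hR'.continuous_seminorm ())
  exact hR'.continuous_of_continuous_comp (φ i) fun _ => hR i

theorem IsPiTensorProduct.exists_seminorm_append_eq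
    {E : Type*} [AddCommGroup E] [Module ℝ E] [tE : TopologicalSpace E]
    [IsTopologicalAddGroup E] [ContinuousSMul ℝ E] [LocallyConvexSpace ℝ E]
    {k : ℕ} {T : Type*} [AddCommGroup T] [Module ℝ T] {tT : TopologicalSpace T}
    {τ : MultilinearMap ℝ (fun _ : Fin (k + 1) => E) T}
    (hT : IsPiTensorProduct (fun _ => tE) tT τ) {p : Seminorm ℝ E} (hp : Continuous p)
    (g : StrongDual ℝ E) :
    ∃ r : Seminorm ℝ T, Continuous[tT, _] r ∧
      ∀ a x, r (τ (Fin.append (fun _ : Fin k => a) (fun _ : Fin 1 => x))) = |g a| ^ k * p x := by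
  let m : MultilinearMap ℝ (fun _ : Fin (k + 1) => E) E := MultilinearMap.uncurryRight <|
    (MultilinearMap.mkPiRing ℝ (Fin k) LinearMap.id).compLinearMap fun _ => (g : E →ₗ[ℝ] ℝ)
  have hm : ∀ z, m z = (∏ i : Fin k, g (z i.castSucc)) • z (Fin.last k) := fun z => by
    simp [m, MultilinearMap.uncurryRight_apply, Fin.init]
  obtain ⟨Ψ, hΨ⟩ := hT.exists_linearMap_compMultilinearMap_eq m
  have hΨτ : ∀ z, Ψ (τ z) = (∏ i : Fin k, g (z i.castSucc)) • z (Fin.last k) := fun z =>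
    (DFunLike.congr_fun hΨ z).trans (hm z)
  have hΨc : Continuous[tT, _] Ψ := by
    refine LinearMap.continuous_of_finest_locallyConvex hT.2.2.2.2.2 Ψ ?_
    rw [show Ψ ∘ τ = _ from funext hΨτ]
    exact (continuous_finsetProd _ fun i _ => g.continuous.comp (continuous_apply _)).smul
      (continuous_apply _)
  refine ⟨p.comp Ψ, hp.comp hΨc, fun a x => ?_⟩
  simp [hΨτ, Fin.append_right_eq_snoc, map_smul_eq_mul]

theorem IsPiTensorProduct.exists_seminorm_append_ge
    {E : Type*} [AddCommGroup E] [Module ℝ E] [tE : TopologicalSpace E]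
    [IsTopologicalAddGroup E] [ContinuousSMul ℝ E] [LocallyConvexSpace ℝ E]
    {k : ℕ} {T : Type*} [AddCommGroup T] [Module ℝ T] {tT : TopologicalSpace T}
    {τ : MultilinearMap ℝ (fun _ : Fin (k + 1) => E) T}
    (hT : IsPiTensorProduct (fun _ => tE) tT τ) {p : Seminorm ℝ E} (hp : Continuous p) :
    ∃ r : Seminorm ℝ T, Continuous[tT, _] r ∧ ∃ a : E, ∃ c > (0 : ℝ),
      ∀ x, c * p x ≤ r (τ (Fin.append (fun _ : Fin k => a) (fun _ : Fin 1 => x))) := by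
  obtain hp0 | ⟨a, ha⟩ := forall_or_exists_not fun a => p a = 0
  · exact ⟨0, continuous_const, 0, 1, one_pos, fun x => by simp [hp0 x]⟩
  obtain ⟨g, hga⟩ := Seminorm.exists_strongDual_apply_eq hp a
  obtain ⟨r, hrc, hr⟩ := hT.exists_seminorm_append_eq hp g
  exact ⟨r, hrc, a, |g a| ^ k, pow_pos (abs_pos.2 (hga ▸ ha)) k, fun x => (hr a x).ge⟩

section DFinsuppSum

variable {ι : Type*} [DecidableEq ι] {T : ι → Type*} [∀ i, AddCommGroup (T i)]
  [∀ i, Module ℝ (T i)]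

open scoped Classical in
noncomputable def Seminorm.dfinsuppSum (ρ : ∀ i, Seminorm ℝ (T i)) : Seminorm ℝ (Π₀ i, T i) :=
  Seminorm.of (fun u => u.sum fun i x => ρ i x)
    (fun u v => by
      rw [DFinsupp.sum_of_support_subset (f := u + v) DFinsupp.support_add (by simp),
        DFinsupp.sum_of_support_subset (f := u) Finset.subset_union_left (by simp),
        DFinsupp.sum_of_support_subset (f := v) Finset.subset_union_right (by simp),
        ← Finset.sum_add_distrib]
      exact Finset.sum_le_sum fun i _ => map_add_le_add _ _ _)
    (fun c u => by
      rw [DFinsupp.sum_of_support_subset (f := c • u) (DFinsupp.support_smul c u) (by simp),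
        DFinsupp.sum, Finset.mul_sum]
      exact Finset.sum_congr rfl fun i _ => map_smul_eq_mul _ _ _)

theorem Seminorm.dfinsuppSum_single (ρ : ∀ i, Seminorm ℝ (T i)) (i : ι) (x : T i) :
    Seminorm.dfinsuppSum ρ (DFinsupp.single i x) = ρ i x := by
  classical
  exact DFinsupp.sum_single_index (map_zero _)

end DFinsuppSum

theorem le_mul_of_forall_gt_le_mul {a b c : ℝ} (h : ∀ s t, a < s → b < t → c ≤ s * t) :
    c ≤ a * b := by
  have hlim : Tendsto (fun ε : ℝ => (a + ε) * (b + ε)) (𝓝[>] 0) (𝓝 (a * b)) := by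
    refine tendsto_nhdsWithin_of_tendsto_nhds ?_
    exact (by fun_prop : Continuous fun ε : ℝ => (a + ε) * (b + ε)).tendsto' 0 _ (by simp)
  refine ge_of_tendsto hlim (eventually_nhdsWithin_of_forall fun ε hε => h _ _ ?_ ?_) <;>
    linarith [Set.mem_Ioi.1 hε]

theorem exists_continuous_seminorm_ball_subset {X : Type*} [AddCommGroup X] [Module ℝ X]
    [TopologicalSpace X] [IsTopologicalAddGroup X] [ContinuousSMul ℝ X] [LocallyConvexSpace ℝ X]
    {U : Set X} (hU : U ∈ 𝓝 0) : ∃ Q : Seminorm ℝ X, Continuous Q ∧ Q.ball 0 1 ⊆ U := by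
  obtain ⟨W, ⟨hW0, hWo, hWb, hWc⟩, hWU⟩ := (nhds_hasBasis_absConvex_open ℝ X).mem_iff.1 hU
  let Q : Seminorm ℝ X := gaugeSeminorm hWb hWc (absorbent_nhds_zero (hWo.mem_nhds hW0))
  have hball : Q.ball 0 1 = W := gaugeSeminorm_ball_one hWo
  exact ⟨Q, Seminorm.continuous (r := 1) (hball ▸ hWo.mem_nhds hW0), hball.le.trans hWU⟩

theorem exists_continuous_seminorm_bilinear_le {X Y : Type*} [AddCommGroup X] [Module ℝ X]
    [TopologicalSpace X] [IsTopologicalAddGroup X] [ContinuousSMul ℝ X] [LocallyConvexSpace ℝ X]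
    [AddCommGroup Y] [Module ℝ Y] [TopologicalSpace Y] (β : X →ₗ[ℝ] X →ₗ[ℝ] Y)
    (hβ : ContinuousAt (fun uv : X × X => β uv.1 uv.2) 0) {R : Seminorm ℝ Y} (hR : Continuous R) :
    ∃ Q : Seminorm ℝ X, Continuous Q ∧ ∀ u v, R (β u v) ≤ Q u * Q v := by
  have hball : (fun uv : X × X => β uv.1 uv.2) ⁻¹' R.ball 0 1 ∈ 𝓝 (0, 0) :=
    hβ.preimage_mem_nhds (by simpa using R.ball_mem_nhds hR one_pos)
  obtain ⟨U, hU, V, hV, hUV⟩ := mem_nhds_prod_iff.1 hball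
  obtain ⟨Q, hQc, hQ⟩ := exists_continuous_seminorm_ball_subset (inter_mem hU hV)
  have hlt : ∀ u v, Q u < 1 → Q v < 1 → R (β u v) < 1 := fun u v hu hv => by
    have huv : (u, v) ∈ U ×ˢ V := ⟨(hQ (show u ∈ Q.ball 0 1 by simpa using hu)).1,
      (hQ (show v ∈ Q.ball 0 1 by simpa using hv)).2⟩
    simpa using hUV huv
  refine ⟨Q, hQc, fun u v => le_mul_of_forall_gt_le_mul fun s t hs ht => ?_⟩
  have hs0 : 0 < s := (apply_nonneg Q u).trans_lt hs
  have ht0 : 0 < t := (apply_nonneg Q v).trans_lt ht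
  have := hlt (s⁻¹ • u) (t⁻¹ • v)
    (by rwa [map_smul_eq_mul, Real.norm_of_nonneg (by positivity), inv_mul_lt_one₀ hs0])
    (by rwa [map_smul_eq_mul, Real.norm_of_nonneg (by positivity), inv_mul_lt_one₀ ht0])
  simp only [map_smul, LinearMap.smul_apply, smul_smul] at this
  rw [map_smul_eq_mul,
    Real.norm_of_nonneg (by positivity), ← mul_inv, inv_mul_lt_one₀ (by positivity)] at this
  exact (mul_comm s t).symm ▸ this.le

theorem exists_pos_forall_le_mul {α : Type*} {f g : α → ℝ} {c M : ℝ} (hc : 0 < c) (hM : 0 ≤ M)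
    (hg : ∀ x, 0 ≤ g x) (h : ∀ x, c * f x ≤ M * g x) : ∃ C > (0 : ℝ), ∀ x, f x ≤ C * g x := by
  refine ⟨M / c + 1, by positivity, fun x => ?_⟩
  calc f x ≤ M / c * g x := by
        rw [div_mul_eq_mul_div, le_div_iff₀ hc, mul_comm]; exact h x
    _ ≤ (M / c + 1) * g x := by nlinarith [hg x]

/-- **Theorem B, necessity**: if the tensor algebra `T_π(E)` of a locally convex
space `E` is a topological algebra, then `E` satisfies the countable upper bound
condition. -/
theorem countableUBC_of_tensorAlgebra_topologicalAlgebra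
    {E : Type*} [AddCommGroup E] [Module ℝ E] [tE : TopologicalSpace E]
    [IsTopologicalAddGroup E] [ContinuousSMul ℝ E] [LocallyConvexSpace ℝ E]
    -- the projective tensor powers `T j = T^j_π(E)`:
    {T : ℕ → Type*} [∀ j, AddCommGroup (T j)] [∀ j, Module ℝ (T j)]
    [tT : ∀ j, TopologicalSpace (T j)]
    (τ : ∀ j, MultilinearMap ℝ (fun _ : Fin j => E) (T j))
    (hT : ∀ j, IsPiTensorProduct (fun _ : Fin j => tE) (tT j) (τ j))
    -- the tensor algebra `T_π(E) = ⨁_j T^j_π(E)` with the locally convex direct sum topology: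
    [tS : TopologicalSpace (Π₀ j, T j)]
    (hS : IsLcxDirectSumTopology (fun j => tT j) tS)
    -- the algebra multiplication, determined by concatenation of elementary tensors:
    (β : (Π₀ j, T j) →ₗ[ℝ] (Π₀ j, T j) →ₗ[ℝ] (Π₀ j, T j))
    (hβ : ∀ (i j : ℕ) (x : Fin i → E) (y : Fin j → E),
      β (DFinsupp.single i ((τ i) x)) (DFinsupp.single j ((τ j) y)) =
        DFinsupp.single (i + j) ((τ (i + j)) (Fin.append x y)))
    (hcont : Continuous fun pr : (Π₀ j, T j) × (Π₀ j, T j) => β pr.1 pr.2) :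
    ∀ p : ℕ → Seminorm ℝ E, (∀ k, Continuous (p k)) →
      ∃ q : Seminorm ℝ E, Continuous q ∧ ∀ k, ∃ C > (0 : ℝ), ∀ x, p k x ≤ C * q x := by
  intro p hp
  obtain ⟨hSg, hSs, hSl, hSi, hSmin⟩ := hS
  have := fun j => (hT j).2.1
  choose r hrc a c hc hr using fun k => (hT (k + 1)).exists_seminorm_append_ge (hp k)
  let ρ : ∀ j, Seminorm ℝ (T j) := fun j => Nat.casesOn j 0 r
  have hRc : Continuous (Seminorm.dfinsuppSum ρ) :=
    Seminorm.continuous_of_finest_locallyConvex (φ := DFinsupp.lsingle) hSmin _ fun j => by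
      cases j
      · simpa [Function.comp_def, Seminorm.dfinsuppSum_single, ρ] using continuous_const
      · simpa [Function.comp_def, Seminorm.dfinsuppSum_single, ρ] using hrc _
  obtain ⟨Q, hQc, hQ⟩ := exists_continuous_seminorm_bilinear_le β hcont.continuousAt hRc
  let ι : E →ₗ[ℝ] Π₀ j, T j :=
    DFinsupp.lsingle 1 ∘ₗ (MultilinearMap.ofSubsingleton ℝ E (T 1) 0).symm (τ 1)
  refine ⟨Q.comp ι, hQc.comp ((hSi 1).comp ((hT 1).2.2.2.2.1.comp
    (continuous_pi fun _ => continuous_id))), fun k => ?_⟩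
  have hbound : ∀ x, c k * p k x ≤
      Q (DFinsupp.single k (τ k fun _ => a k)) * Q (DFinsupp.single 1 (τ 1 fun _ => x)) :=
    fun x => (hr k x).trans <| by
      simpa [hβ, Seminorm.dfinsuppSum_single, ρ] using hQ (DFinsupp.single k (τ k fun _ => a k))
        (DFinsupp.single 1 (τ 1 fun _ => x))
  exact exists_pos_forall_le_mul (g := Q.comp ι) (hc k) (apply_nonneg _ _)
    (fun _ => apply_nonneg _ _) hbound
end
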